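/- arXiv:1211.6173 — 5 statements merged into one kernel-verified Lean document; each statement's English description precedes it below -/
import Mathlib

section
/- Let β : [0,∞) → ℝ be nonnegative, continuously differentiable with compact support, β(0) = 0, and with β ∈ L¹ and β' ∈ L². Then there is a universal constant C > 0 such that ∫₀^∞ β(x)² dx ≤ C (∫₀^∞ β'(x)² dx)^{3/5} (∫₀^∞ x β(x) dx)^{4/5}. -/
/-!
Since `β 0 = 0`, the fundamental theorem of calculus and Cauchy–Schwarz give the uniform bound
`β x ^ 2 ≤ 2 ∫ |β β'| ≤ 2 ‖β‖₂ ‖β'‖₂ =: M ^ 2` on `[0, ∞)`. Splitting `∫ β²` at `r`, the part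
on `(0, r]` is at most `r M²`, and the part on `(r, ∞)` is at most `(M / r) ∫ x β` because
`β² ≤ M β ≤ (M / r) x β` there. Optimizing over `r` gives `‖β‖₂⁴ ≤ 4 M³ ∫ x β`, and inserting
`M⁴ ≤ 4 ‖β‖₂² ‖β'‖₂²` yields `‖β‖₂¹⁰ ≤ 2¹⁴ ‖β'‖₂⁶ (∫ x β)⁴`.
-/

open MeasureTheory Set

theorem integral_abs_mul_sq_le {α : Type*} [MeasurableSpace α] {μ : Measure α} {f g : α → ℝ}
    (hf : MemLp f 2 μ) (hg : MemLp g 2 μ) :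
    (∫ a, |f a * g a| ∂μ) ^ 2 ≤ (∫ a, f a ^ 2 ∂μ) * ∫ a, g a ^ 2 ∂μ := by
  have holder := integral_mul_norm_le_Lp_mul_Lq (μ := μ) Real.HolderConjugate.two_two
    (by simpa using hf) (by simpa using hg)
  simp only [Real.rpow_two, Real.norm_eq_abs, sq_abs, ← abs_mul] at holder
  calc (∫ a, |f a * g a| ∂μ) ^ 2
      ≤ ((∫ a, f a ^ 2 ∂μ) ^ (1 / 2 : ℝ) * (∫ a, g a ^ 2 ∂μ) ^ (1 / 2 : ℝ)) ^ 2 :=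
        pow_le_pow_left₀ (integral_nonneg fun _ => abs_nonneg _) holder 2
    _ = (∫ a, f a ^ 2 ∂μ) * ∫ a, g a ^ 2 ∂μ := by
        rw [mul_pow, ← Real.sqrt_eq_rpow, ← Real.sqrt_eq_rpow,
          Real.sq_sqrt (integral_nonneg fun _ => sq_nonneg _),
          Real.sq_sqrt (integral_nonneg fun _ => sq_nonneg _)]

theorem sq_le_two_mul_integral_abs_mul_deriv {f : ℝ → ℝ} (hf : ContDiff ℝ 1 f)
    (hsupp : HasCompactSupport f) (h0 : f 0 = 0) {x : ℝ} (hx : 0 ≤ x) :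
    f x ^ 2 ≤ 2 * ∫ t in Ioi 0, |f t * deriv f t| := by
  have hf' : Continuous (deriv f) := hf.continuous_deriv le_rfl
  have hderiv : ∀ t, HasDerivAt (fun y => f y ^ 2) (2 * f t * deriv f t) t := fun t => by
    simpa [mul_comm, mul_left_comm] using
      ((hf.differentiable one_ne_zero t).hasDerivAt.fun_pow 2)
  have hcont : Continuous fun t => 2 * |f t * deriv f t| := by fun_prop
  have hint : IntegrableOn (fun t => 2 * |f t * deriv f t|) (Ioi 0) :=
    (hcont.integrable_of_hasCompactSupport (hsupp.mul_right.abs.mul_left)).integrableOn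
  calc f x ^ 2 = ∫ t in 0..x, 2 * f t * deriv f t := by
        rw [intervalIntegral.integral_eq_sub_of_hasDerivAt (fun t _ => hderiv t)
          ((by fun_prop : Continuous fun t => 2 * f t * deriv f t).intervalIntegrable _ _)]
        simp [h0]
    _ ≤ ∫ t in 0..x, 2 * |f t * deriv f t| :=
        intervalIntegral.integral_mono_on hx
          ((by fun_prop : Continuous fun t => 2 * f t * deriv f t).intervalIntegrable _ _)
          (hcont.intervalIntegrable _ _) fun t _ => by
            rw [mul_assoc]; exact mul_le_mul_of_nonneg_left (le_abs_self _) two_pos.le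
    _ = ∫ t in Ioc 0 x, 2 * |f t * deriv f t| := intervalIntegral.integral_of_le hx
    _ ≤ ∫ t in Ioi 0, 2 * |f t * deriv f t| :=
        setIntegral_mono_set hint (.of_forall fun _ => by positivity)
          Ioc_subset_Ioi_self.eventuallyLE
    _ = 2 * ∫ t in Ioi 0, |f t * deriv f t| := integral_const_mul _ _

theorem exists_abs_le_and_pow_four_le {f : ℝ → ℝ} (hf : ContDiff ℝ 1 f)
    (hsupp : HasCompactSupport f) (h0 : f 0 = 0) :
    ∃ M, 0 ≤ M ∧ (∀ x, 0 ≤ x → |f x| ≤ M) ∧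
      M ^ 4 ≤ 4 * (∫ x in Ioi 0, f x ^ 2) * ∫ x in Ioi 0, deriv f x ^ 2 := by
  have hmemLp : ∀ {g : ℝ → ℝ}, Continuous g → HasCompactSupport g →
      MemLp g 2 (volume.restrict (Ioi 0)) := fun hg hgs =>
    (hg.memLp_of_hasCompactSupport hgs).restrict _
  have hCS := integral_abs_mul_sq_le (hmemLp hf.continuous hsupp)
    (hmemLp (hf.continuous_deriv le_rfl) hsupp.deriv)
  refine ⟨√(2 * ∫ t in Ioi 0, |f t * deriv f t|), Real.sqrt_nonneg _, fun x hx =>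
    Real.abs_le_sqrt (sq_le_two_mul_integral_abs_mul_deriv hf hsupp h0 hx), ?_⟩
  rw [show ∀ y : ℝ, y ^ 4 = (y ^ 2) ^ 2 from fun y => by ring,
    Real.sq_sqrt (mul_nonneg two_pos.le (integral_nonneg fun _ => abs_nonneg _))]
  linarith

theorem setIntegral_sq_le_mul_sq_add {f : ℝ → ℝ} {M r : ℝ} (hr : 0 < r)
    (hf_nonneg : ∀ x, 0 < x → 0 ≤ f x) (hf_le : ∀ x, 0 < x → f x ≤ M)
    (hf_sq : IntegrableOn (fun x => f x ^ 2) (Ioi 0))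
    (hf_mom : IntegrableOn (fun x => x * f x) (Ioi 0)) :
    ∫ x in Ioi 0, f x ^ 2 ≤ r * M ^ 2 + M / r * ∫ x in Ioi 0, x * f x := by
  have pointwise : ∀ x ∈ Ioi (0 : ℝ),
      f x ^ 2 ≤ (Ioc 0 r).indicator (fun _ => M ^ 2) x + M / r * (x * f x) := by
    rintro x (hx : 0 < x)
    have h0 := hf_nonneg x hx
    have hM := hf_le x hx
    have hMr : 0 ≤ M / r := div_nonneg (h0.trans hM) hr.le
    by_cases hxr : x ≤ r
    · rw [indicator_of_mem (show x ∈ Ioc 0 r from ⟨hx, hxr⟩)]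
      nlinarith [mul_nonneg hMr (mul_nonneg hx.le h0)]
    · rw [indicator_of_notMem fun h => hxr h.2, zero_add, div_mul_eq_mul_div,
        le_div_iff₀ hr]
      nlinarith [mul_le_mul_of_nonneg_right hM h0]
  have hind : IntegrableOn ((Ioc 0 r).indicator fun _ => M ^ 2) (Ioi 0) :=
    ((integrableOn_const (s := Ioc 0 r) (by simp)).integrable_indicator
      measurableSet_Ioc).integrableOn
  calc ∫ x in Ioi 0, f x ^ 2
      ≤ ∫ x in Ioi 0, (Ioc 0 r).indicator (fun _ => M ^ 2) x + M / r * (x * f x) :=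
        setIntegral_mono_on hf_sq (hind.add (hf_mom.const_mul _)) measurableSet_Ioi pointwise
    _ = r * M ^ 2 + M / r * ∫ x in Ioi 0, x * f x := by
        rw [integral_add hind (hf_mom.const_mul _), integral_const_mul,
          setIntegral_indicator measurableSet_Ioc,
          inter_eq_right.mpr Ioc_subset_Ioi_self, setIntegral_const,
          Real.volume_real_Ioc_of_le hr.le, smul_eq_mul, sub_zero]

theorem sq_le_of_forall_le_mul_sq_add_div {E M F : ℝ} (hE : 0 ≤ E) (hM : 0 ≤ M) (hF : 0 ≤ F)
    (h : ∀ r, 0 < r → E ≤ r * M ^ 2 + M / r * F) : E ^ 2 ≤ 4 * M ^ 3 * F := by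
  rcases hE.eq_or_lt with rfl | hE
  · rw [sq, zero_mul]; positivity
  rcases hM.eq_or_lt with rfl | hM
  · linarith [show E ≤ 0 by simpa using h 1 one_pos]
  -- `r = E / (2 M²)` is a root-free substitute for the optimal `r = √(F / M)`
  have hr := h (E / (2 * M ^ 2)) (by positivity)
  field_simp at hr
  nlinarith

theorem pow_five_le_of_sq_le_mul_pow_three {E D F M : ℝ} (hD : 0 ≤ D)
    (hM : M ^ 4 ≤ 4 * E * D) (hE : E ^ 2 ≤ 4 * M ^ 3 * F) : E ^ 5 ≤ 2 ^ 14 * D ^ 3 * F ^ 4 := by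
  rcases le_or_gt E 0 with hE0 | hE0
  · exact (Odd.pow_nonpos (by decide) hE0).trans (by positivity)
  have h8 : E ^ 3 * E ^ 5 ≤ E ^ 3 * (2 ^ 14 * D ^ 3 * F ^ 4) :=
    calc E ^ 3 * E ^ 5 = (E ^ 2) ^ 4 := by ring
      _ ≤ (4 * M ^ 3 * F) ^ 4 := pow_le_pow_left₀ (sq_nonneg E) hE 4
      _ = 256 * (M ^ 4) ^ 3 * F ^ 4 := by ring
      _ ≤ 256 * (4 * E * D) ^ 3 * F ^ 4 := by gcongr
      _ = E ^ 3 * (2 ^ 14 * D ^ 3 * F ^ 4) := by ring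
  exact le_of_mul_le_mul_left h8 (by positivity)

theorem le_mul_rpow_mul_rpow_of_pow_five_le {E D F c : ℝ} (hD : 0 ≤ D) (hF : 0 ≤ F)
    (hc : 0 ≤ c) (h : E ^ 5 ≤ c ^ 5 * D ^ 3 * F ^ 4) :
    E ≤ c * D ^ ((3 : ℝ) / 5) * F ^ ((4 : ℝ) / 5) := by
  refine le_of_pow_le_pow_left₀ (n := 5) (by norm_num) (by positivity) ?_
  rw [mul_pow, mul_pow, ← Real.rpow_natCast (D ^ _), ← Real.rpow_mul hD,
    ← Real.rpow_natCast (F ^ _), ← Real.rpow_mul hF]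
  norm_num
  exact h

theorem nash_inequality_halfline :
    ∃ C : ℝ, 0 < C ∧
      ∀ β : ℝ → ℝ, ContDiff ℝ 1 β → HasCompactSupport β → β 0 = 0 →
        (∀ x, 0 ≤ x → 0 ≤ β x) →
        IntegrableOn β (Ioi (0 : ℝ)) →
        IntegrableOn (fun x => (deriv β x) ^ 2) (Ioi (0 : ℝ)) →
        (∫ x in Ioi (0 : ℝ), (β x) ^ 2) ≤
          C * (∫ x in Ioi (0 : ℝ), (deriv β x) ^ 2) ^ ((3 : ℝ) / 5) *
            (∫ x in Ioi (0 : ℝ), x * β x) ^ ((4 : ℝ) / 5) := by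
  refine ⟨8, by norm_num, fun β hβ hsupp hβ0 hβ_nonneg _ _ => ?_⟩
  have hβc : Continuous β := hβ.continuous
  have hsupp_sq : HasCompactSupport fun x => β x ^ 2 :=
    hsupp.comp_left (g := fun y : ℝ => y ^ 2) (zero_pow two_ne_zero)
  have hβ_sq : IntegrableOn (fun x => β x ^ 2) (Ioi 0) :=
    ((hβc.pow 2).integrable_of_hasCompactSupport hsupp_sq).integrableOn
  have hβ_mom : IntegrableOn (fun x => x * β x) (Ioi 0) :=
    ((continuous_id.mul hβc).integrable_of_hasCompactSupport hsupp.mul_left).integrableOn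
  obtain ⟨M, hM, hβM, hM4⟩ := exists_abs_le_and_pow_four_le hβ hsupp hβ0
  have hE : 0 ≤ ∫ x in Ioi 0, β x ^ 2 :=
    setIntegral_nonneg measurableSet_Ioi fun x _ => sq_nonneg _
  have hD : 0 ≤ ∫ x in Ioi 0, deriv β x ^ 2 :=
    setIntegral_nonneg measurableSet_Ioi fun x _ => sq_nonneg _
  have hF : 0 ≤ ∫ x in Ioi 0, x * β x := setIntegral_nonneg measurableSet_Ioi fun x hx =>
    mul_nonneg hx.le (hβ_nonneg x hx.le)
  have hE2 := sq_le_of_forall_le_mul_sq_add_div hE hM hF fun r hr =>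
    setIntegral_sq_le_mul_sq_add hr (fun x hx => hβ_nonneg x hx.le)
      (fun x hx => (le_abs_self _).trans (hβM x hx.le)) hβ_sq hβ_mom
  refine le_mul_rpow_mul_rpow_of_pow_five_le hD hF (by norm_num) ?_
  calc _ ≤ 2 ^ 14 * _ ^ 3 * _ ^ 4 := pow_five_le_of_sq_le_mul_pow_three hD hM4 hE2
    _ ≤ 8 ^ 5 * _ ^ 3 * _ ^ 4 := by gcongr; norm_num
end

section
/- For every M > 0 there exists κ_M > 0 such that for every nonnegative C¹ function u on [0,1] satisfying |u'(x)| ≤ M ∫₀¹ u for all x ∈ [0,1], one has ∫₀¹ u(x) dx ≤ κ_M ∫₀¹ x u(x) dx. -/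
/-!
By the mean value theorem `u` oscillates by at most `M ∫ u` on `[0, 1]`, so `u ≤ (1 + M) ∫ u`
pointwise. Hence `[0, t]` carries mass at most `(1 + M) t ∫ u`, and the rest of the mass sits
where `x ≥ t`, which gives `∫ x u ≥ t (1 - (1 + M) t) ∫ u`. The choice `t = 1 / (2 (1 + M))`
yields `κ_M = 4 (1 + M)`.
-/

open MeasureTheory Set intervalIntegral

lemma mul_le_integral_add_of_abs_derivWithin_le {u : ℝ → ℝ} {a b L x : ℝ} (hab : a ≤ b)
    (hu : DifferentiableOn ℝ u (Icc a b))
    (hder : ∀ y ∈ Icc a b, |derivWithin u (Icc a b) y| ≤ L) (hx : x ∈ Icc a b) :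
    (b - a) * u x ≤ (∫ y in a..b, u y) + L * (b - a) ^ 2 := by
  have hL : 0 ≤ L := (abs_nonneg _).trans (hder x hx)
  have hosc : ∀ y ∈ Icc a b, u x ≤ u y + L * (b - a) := by
    intro y hy
    have hmvt := (convex_Icc a b).norm_image_sub_le_of_norm_derivWithin_le hu hder hy hx
    rw [Real.norm_eq_abs, Real.norm_eq_abs] at hmvt
    have hxy : |x - y| ≤ b - a :=
      abs_sub_le_iff.2 ⟨by linarith [hx.2, hy.1], by linarith [hx.1, hy.2]⟩
    linarith [le_abs_self (u x - u y), mul_le_mul_of_nonneg_left hxy hL]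
  have hint : IntervalIntegrable u volume a b :=
    (hu.continuousOn.mono (uIcc_of_le hab).subset).intervalIntegrable
  calc (b - a) * u x = ∫ _ in a..b, u x := by simp
    _ ≤ ∫ y in a..b, (u y + L * (b - a)) :=
        integral_mono_on hab intervalIntegrable_const (hint.add intervalIntegrable_const) hosc
    _ = (∫ y in a..b, u y) + L * (b - a) ^ 2 := by
        rw [integral_add hint intervalIntegrable_const, intervalIntegral.integral_const,
          smul_eq_mul]
        ring

lemma mul_sub_le_integral_mul_of_le {u : ℝ → ℝ} {C t : ℝ} (hu : ContinuousOn u (Icc 0 1))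
    (hpos : ∀ x ∈ Icc (0 : ℝ) 1, 0 ≤ u x) (hC : ∀ x ∈ Icc (0 : ℝ) 1, u x ≤ C)
    (ht : t ∈ Icc (0 : ℝ) 1) :
    t * ((∫ x in (0 : ℝ)..1, u x) - C * t) ≤ ∫ x in (0 : ℝ)..1, x * u x := by
  have hint : ∀ {a b}, a ∈ Icc (0 : ℝ) 1 → b ∈ Icc (0 : ℝ) 1 →
      IntervalIntegrable u volume a b :=
    fun ha hb => (hu.mono (uIcc_subset_Icc ha hb)).intervalIntegrable
  have hintx : ∀ {a b}, a ∈ Icc (0 : ℝ) 1 → b ∈ Icc (0 : ℝ) 1 →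
      IntervalIntegrable (fun x => x * u x) volume a b :=
    fun ha hb => ((continuousOn_id.mul hu).mono (uIcc_subset_Icc ha hb)).intervalIntegrable
  have h0 : (0 : ℝ) ∈ Icc (0 : ℝ) 1 := left_mem_Icc.2 zero_le_one
  have h1 : (1 : ℝ) ∈ Icc (0 : ℝ) 1 := right_mem_Icc.2 zero_le_one
  have hhead : ∫ x in (0 : ℝ)..t, u x ≤ C * t := by
    calc ∫ x in (0 : ℝ)..t, u x ≤ ∫ _ in (0 : ℝ)..t, C :=
          integral_mono_on ht.1 (hint h0 ht) intervalIntegrable_const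
            fun x hx => hC x ⟨hx.1, hx.2.trans ht.2⟩
      _ = C * t := by simp [mul_comm]
  have hhead_moment : 0 ≤ ∫ x in (0 : ℝ)..t, x * u x :=
    integral_nonneg ht.1 fun x hx => mul_nonneg hx.1 (hpos x ⟨hx.1, hx.2.trans ht.2⟩)
  have htail_moment : t * ∫ x in t..1, u x ≤ ∫ x in t..1, x * u x := by
    rw [← intervalIntegral.integral_const_mul]
    exact integral_mono_on ht.2 ((hint ht h1).const_mul t) (hintx ht h1)
      fun x hx => mul_le_mul_of_nonneg_right hx.1 (hpos x ⟨ht.1.trans hx.1, hx.2⟩)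
  rw [← integral_add_adjacent_intervals (hint h0 ht) (hint ht h1),
    ← integral_add_adjacent_intervals (hintx h0 ht) (hintx ht h1)]
  linarith [mul_le_mul_of_nonneg_left hhead ht.1]

theorem moment_lower_bound (M : ℝ) (hM : 0 < M) :
    ∃ κ : ℝ, 0 < κ ∧
      ∀ u : ℝ → ℝ, ContDiffOn ℝ 1 u (Set.Icc 0 1) →
        (∀ x ∈ Set.Icc (0 : ℝ) 1, 0 ≤ u x) →
        (∀ x ∈ Set.Icc (0 : ℝ) 1, |derivWithin u (Set.Icc 0 1) x| ≤ M * ∫ y in (0 : ℝ)..1, u y) →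
        (∫ x in (0 : ℝ)..1, u x) ≤ κ * ∫ x in (0 : ℝ)..1, x * u x := by
  refine ⟨4 * (1 + M), by positivity, fun u hu hpos hder => ?_⟩
  set I := ∫ x in (0 : ℝ)..1, u x
  have hbound : ∀ x ∈ Icc (0 : ℝ) 1, u x ≤ (1 + M) * I := fun x hx => by
    have := mul_le_integral_add_of_abs_derivWithin_le zero_le_one
      (hu.differentiableOn one_ne_zero) hder hx
    linarith
  have ht : 1 / (2 * (1 + M)) ∈ Icc (0 : ℝ) 1 :=
    ⟨by positivity, (div_le_one (by positivity)).2 (by linarith)⟩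
  have hkey := mul_sub_le_integral_mul_of_le hu.continuousOn hpos hbound ht
  have hval :
      1 / (2 * (1 + M)) * (I - (1 + M) * I * (1 / (2 * (1 + M)))) = I / (4 * (1 + M)) := by
    field_simp
    ring
  rw [hval, div_le_iff₀ (by positivity)] at hkey
  linarith
end

section
/- Let r > 0, c > 0, T > 0 be large enough that τ ↦ c t - r log((t+T)/T) is strictly increasing in t for t ≥ 0, and define h implicitly by c τ = c h(τ) - r log((h(τ)+T)/T). Then 1/h'(τ) = 1 - r/(c(τ+T)) + β(τ), where β(τ) = r² log((h(τ)+T)/T) / (c(τ+T)(c(τ+T) + r log((h(τ)+T)/T))) ≥ 0 satisfies β(τ) ≤ C τ^{-3/2} for all τ ≥ 1 and some constant C; in particular h'(τ) > 1 for all τ > 0. -/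
/-!
Write `g(t) = c t - r log((t + T)/T)`, so that `g (h τ) = c τ`. Differentiating,
`g'(h τ) h'(τ) = c` with `g'(x) = c - r/(x + T)`, hence `1/h'(τ) = 1 - r/(c (h τ + T))`, and
substituting `c (h τ + T) = c (τ + T) + r log((h τ + T)/T)` produces the correction `β`.
Since `g` is convex with `g 0 = 0`, `g (h τ) > 0` forces `g'(h τ) > 0`, whence `h' > 1`.
The decay of `β` comes from `log y ≤ 2 √y` together with `h τ ≥ τ`.
-/

open Real Set

/-- The front position at time `t`, corrected by the logarithmic Bramson shift. -/
noncomputable def bramsonFront (r c T t : ℝ) : ℝ := c * t - r * log ((t + T) / T)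

noncomputable def bramsonCorrection (r c T τ x : ℝ) : ℝ :=
  r ^ 2 * log ((x + T) / T) / (c * (τ + T) * (c * (τ + T) + r * log ((x + T) / T)))

theorem mul_deriv_eq_of_eqOn_comp {𝕜 : Type*} [NontriviallyNormedField 𝕜] {f g h : 𝕜 → 𝕜}
    {f' g' τ : 𝕜} {s : Set 𝕜} (hf : HasDerivAt f f' (h τ)) (hh : DifferentiableAt 𝕜 h τ)
    (hg : HasDerivWithinAt g g' s τ) (hfg : EqOn (f ∘ h) g s) (hτ : τ ∈ s)
    (hs : UniqueDiffWithinAt 𝕜 s τ) : f' * deriv h τ = g' :=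
  hs.eq_deriv s (hf.comp τ hh.hasDerivAt).hasDerivWithinAt (hg.congr_of_mem hfg hτ)

theorem log_le_two_mul_sqrt {y : ℝ} (hy : 0 ≤ y) : log y ≤ 2 * √y := by
  have := log_le_rpow_div hy (one_half_pos (α := ℝ))
  rwa [← sqrt_eq_rpow, div_eq_mul_inv, inv_div, div_one, mul_comm] at this

theorem rpow_neg_three_halves {τ : ℝ} (hτ : 0 < τ) : τ ^ (-(3 : ℝ) / 2) = (τ * √τ)⁻¹ := by
  rw [neg_div, rpow_neg hτ.le, show (3 : ℝ) / 2 = 1 + 1 / 2 by norm_num, rpow_add hτ, rpow_one,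
    ← sqrt_eq_rpow]

section BramsonFront

variable {r c T τ x : ℝ}

theorem hasDerivAt_bramsonFront (hT : T ≠ 0) (hx : x + T ≠ 0) :
    HasDerivAt (bramsonFront r c T) (c - r / (x + T)) x := by
  have hlog : HasDerivAt (fun t => log ((t + T) / T)) (1 / (x + T)) x := by
    convert (((hasDerivAt_id' x).add_const T).div_const T).log (div_ne_zero hx hT) using 1
    field_simp
  exact (((hasDerivAt_id' x).const_mul c).sub (hlog.const_mul r)).congr_deriv (by ring)

theorem bramsonFront_le_deriv_mul (hr : 0 ≤ r) (hT : 0 < T) (hx : 0 ≤ x) :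
    bramsonFront r c T x ≤ (c - r / (x + T)) * x := by
  have hxT : 0 < x + T := by linarith
  have hlog := one_sub_inv_le_log_of_pos (div_pos hxT hT)
  have hsub : 1 - ((x + T) / T)⁻¹ = x / (x + T) := by field_simp; ring
  rw [hsub] at hlog
  have := mul_le_mul_of_nonneg_left hlog hr
  unfold bramsonFront
  linarith [show r * (x / (x + T)) = r / (x + T) * x by ring]

theorem sub_div_pos_of_bramsonFront_pos (hr : 0 ≤ r) (hT : 0 < T) (hx : 0 ≤ x)
    (hpos : 0 < bramsonFront r c T x) : 0 < c - r / (x + T) := by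
  by_contra! hneg
  linarith [bramsonFront_le_deriv_mul (c := c) hr hT hx, mul_nonpos_of_nonpos_of_nonneg hneg hx]

theorem add_log_eq_of_eq_bramsonFront (hfront : c * τ = bramsonFront r c T x) :
    c * (x + T) = c * (τ + T) + r * log ((x + T) / T) := by
  unfold bramsonFront at hfront
  linarith

theorem sub_div_div_eq_add_bramsonCorrection (hc : c ≠ 0) (hτ : τ + T ≠ 0) (hx : x + T ≠ 0)
    (hfront : c * τ = bramsonFront r c T x) :
    (c - r / (x + T)) / c = 1 - r / (c * (τ + T)) + bramsonCorrection r c T τ x := by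
  have hshift := add_log_eq_of_eq_bramsonFront hfront
  have hQ : c * (τ + T) + r * log ((x + T) / T) ≠ 0 := by
    rw [← hshift]; exact mul_ne_zero hc hx
  have hsplit : (c - r / (x + T)) / c = 1 - r / (c * (x + T)) := by field_simp
  rw [hsplit, hshift, bramsonCorrection]
  field_simp
  ring

theorem bramsonCorrection_nonneg (hc : 0 < c) (hT : 0 < T) (hτ : 0 ≤ τ) (hx : 0 ≤ x)
    (hfront : c * τ = bramsonFront r c T x) : 0 ≤ bramsonCorrection r c T τ x := by
  have hL : 0 ≤ log ((x + T) / T) := log_nonneg ((one_le_div hT).mpr (by linarith))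
  have hQ : 0 < c * (τ + T) + r * log ((x + T) / T) := by
    rw [← add_log_eq_of_eq_bramsonFront hfront]; positivity
  unfold bramsonCorrection
  positivity

theorem bramsonCorrection_le (hr : 0 ≤ r) (hc : 0 < c) (hT : 0 < T) (hτ : 0 < τ) (hx : 0 ≤ x)
    (hfront : c * τ = bramsonFront r c T x) :
    bramsonCorrection r c T τ x ≤ 2 * r ^ 2 / (c ^ 2 * √T) * τ ^ (-(3 : ℝ) / 2) := by
  have hshift := add_log_eq_of_eq_bramsonFront hfront
  set L := log ((x + T) / T)
  have hL : 0 ≤ L := log_nonneg ((one_le_div hT).mpr (by linarith))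
  have hτx : τ ≤ x := le_of_mul_le_mul_left (by nlinarith) hc
  have hLsqrt : L ≤ 2 * √(x + T) / √T := by
    rw [mul_div_assoc, ← sqrt_div' _ hT.le]
    exact log_le_two_mul_sqrt (by positivity)
  have hsq : √(x + T) * √(x + T) = x + T := mul_self_sqrt (by linarith)
  calc bramsonCorrection r c T τ x
        = r ^ 2 * L / (c ^ 2 * (τ + T) * (√(x + T) * √(x + T))) := by
        rw [hsq, bramsonCorrection, ← hshift]; ring
    _ ≤ r ^ 2 * (2 * √(x + T) / √T) / (c ^ 2 * (τ + T) * (√(x + T) * √(x + T))) := by gcongr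
    _ = 2 * r ^ 2 / (c ^ 2 * √T) * ((τ + T) * √(x + T))⁻¹ := by field_simp
    _ ≤ 2 * r ^ 2 / (c ^ 2 * √T) * (τ * √τ)⁻¹ := by
        gcongr
        · linarith
        · linarith
    _ = 2 * r ^ 2 / (c ^ 2 * √T) * τ ^ (-(3 : ℝ) / 2) := by rw [rpow_neg_three_halves hτ]

theorem one_div_deriv_eq_of_bramsonFront_comp {h : ℝ → ℝ} (hc : c ≠ 0) (hT : 0 < T)
    (hτ : 0 ≤ τ) (hrange : 0 ≤ h τ) (hfront : ∀ t, 0 ≤ t → c * t = bramsonFront r c T (h t))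
    (hdiff : DifferentiableAt ℝ h τ) : 1 / deriv h τ = (c - r / (h τ + T)) / c := by
  have hxT : 0 < h τ + T := by linarith
  have hchain := mul_deriv_eq_of_eqOn_comp (hasDerivAt_bramsonFront hT.ne' hxT.ne')
    hdiff ((hasDerivWithinAt_id τ (Ici 0)).const_mul c) (fun t ht => (hfront t ht).symm)
    hτ (uniqueDiffOn_Ici 0 τ hτ)
  rw [mul_one] at hchain
  have hderiv : deriv h τ ≠ 0 := by
    rintro h0
    rw [h0, mul_zero] at hchain
    exact hc hchain.symm
  rw [div_eq_div_iff hderiv hc, one_mul, hchain]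

end BramsonFront

theorem time_change_derivative_general (r c T : ℝ) (hr : 0 < r) (hc : 0 < c) (hT : 0 < T)
    (h : ℝ → ℝ)
    (hrange : ∀ τ, 0 ≤ τ → 0 ≤ h τ)
    (himpl : ∀ τ, 0 ≤ τ → c * τ = c * h τ - r * Real.log ((h τ + T) / T))
    (hdiff : ∀ τ, 0 ≤ τ → DifferentiableAt ℝ h τ)
    (β : ℝ → ℝ)
    (hβ : β = fun τ => r ^ 2 * Real.log ((h τ + T) / T) /
      (c * (τ + T) * (c * (τ + T) + r * Real.log ((h τ + T) / T)))) :
    (∀ τ, 0 ≤ τ → 0 ≤ β τ ∧ 1 / deriv h τ = 1 - r / (c * (τ + T)) + β τ) ∧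
    (∃ C : ℝ, ∀ τ, 1 ≤ τ → β τ ≤ C * τ ^ (-(3 : ℝ) / 2)) ∧
    (∀ τ, 0 < τ → 1 < deriv h τ) := by
  have hfront : ∀ τ, 0 ≤ τ → c * τ = bramsonFront r c T (h τ) := himpl
  have hβτ : ∀ τ, β τ = bramsonCorrection r c T τ (h τ) := fun τ => by rw [hβ]; rfl
  have hinv : ∀ τ, 0 ≤ τ → 1 / deriv h τ = (c - r / (h τ + T)) / c := fun τ hτ =>
    one_div_deriv_eq_of_bramsonFront_comp hc.ne' hT hτ (hrange τ hτ) hfront (hdiff τ hτ)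
  refine ⟨fun τ hτ => ⟨?_, ?_⟩, ⟨2 * r ^ 2 / (c ^ 2 * √T), fun τ hτ => ?_⟩, fun τ hτ => ?_⟩
  · rw [hβτ]
    exact bramsonCorrection_nonneg hc hT hτ (hrange τ hτ) (hfront τ hτ)
  · rw [hinv τ hτ, hβτ]
    exact sub_div_div_eq_add_bramsonCorrection hc.ne' (by linarith) (by linarith [hrange τ hτ])
      (hfront τ hτ)
  · have hτ0 : 0 ≤ τ := by linarith
    rw [hβτ]
    exact bramsonCorrection_le hr.le hc hT (by linarith) (hrange τ hτ0) (hfront τ hτ0)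
  · have hslope : 0 < c - r / (h τ + T) :=
      sub_div_pos_of_bramsonFront_pos hr.le hT (hrange τ hτ.le)
        (hfront τ hτ.le ▸ mul_pos hc hτ)
    have hslope_lt : c - r / (h τ + T) < c := by
      have : 0 < r / (h τ + T) := div_pos hr (by linarith [hrange τ hτ.le])
      linarith
    have := one_lt_one_div (div_pos hslope hc) ((div_lt_one hc).mpr hslope_lt)
    rwa [← hinv τ hτ.le, one_div_one_div] at this

theorem time_change_derivative (r c T : ℝ) (hr : 0 < r) (hc : 0 < c) (hT : 0 < T)
    (hmono : StrictMonoOn (fun t => c * t - r * Real.log ((t + T) / T)) (Set.Ici 0))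
    (h : ℝ → ℝ)
    (hrange : ∀ τ, 0 ≤ τ → 0 ≤ h τ)
    (himpl : ∀ τ, 0 ≤ τ → c * τ = c * h τ - r * Real.log ((h τ + T) / T))
    (hdiff : ∀ τ, 0 ≤ τ → DifferentiableAt ℝ h τ)
    (β : ℝ → ℝ)
    (hβ : β = fun τ => r ^ 2 * Real.log ((h τ + T) / T) /
      (c * (τ + T) * (c * (τ + T) + r * Real.log ((h τ + T) / T)))) :
    (∀ τ, 0 ≤ τ → 0 ≤ β τ ∧ 1 / deriv h τ = 1 - r / (c * (τ + T)) + β τ) ∧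
    (∃ C : ℝ, ∀ τ, 1 ≤ τ → β τ ≤ C * τ ^ (-(3 : ℝ) / 2)) ∧
    (∀ τ, 0 < τ → 1 < deriv h τ) :=
  time_change_derivative_general r c T hr hc hT h hrange himpl hdiff β hβ
end

section
/- Let V, I : [0,∞) → (0,∞) be differentiable with I'(t) = μ₁ I(t) and V'(t) ≤ μ₂ V(t) - C V(t)^{5/3}/I(t)^{4/3}, where C > 0 and R := (2/3)μ₂ - (4/3)μ₁ > 0. Then V(t) ≤ C' e^{μ₂ t} I(0)² (t-1)^{-3/2} for all t > 1, with C' depending only on C. -/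
/-!
With `Z(t) = e^{-μ₂ t} V(t)` and `I(t) = I(0) e^{μ₁ t}`, the hypothesis becomes
`Z' ≤ -C I(0)^{-4/3} e^{R t} Z^{5/3} ≤ -C I(0)^{-4/3} Z^{5/3}` because `R > 0`. For this
Bernoulli-type inequality `Z^{-2/3}` grows at least linearly, with slope `(2/3) C I(0)^{-4/3}`,
so `Z(t) ≤ ((2/3) C I(0)^{-4/3} (t - 1))^{-3/2} = (2C/3)^{-3/2} I(0)² (t - 1)^{-3/2}`.
-/

open Real Set

theorem hasDerivAt_exp_mul (c x : ℝ) :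
    HasDerivAt (fun y => exp (c * y)) (exp (c * x) * c) x := by
  simpa using ((hasDerivAt_id x).const_mul c).exp

theorem eq_mul_exp_of_deriv_eq_mul {f : ℝ → ℝ} {c : ℝ}
    (hf : ∀ s, 0 ≤ s → DifferentiableAt ℝ f s) (hf' : ∀ s, 0 ≤ s → deriv f s = c * f s)
    {s : ℝ} (hs : 0 ≤ s) : f s = f 0 * exp (c * s) := by
  have hconst : ∀ x ∈ Icc 0 s, f x * exp (-c * x) = f 0 * exp (-c * 0) := by
    refine constant_of_has_deriv_right_zero (fun x hx => ?_) fun x hx => ?_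
    · exact ((hf x hx.1).continuousAt.mul (by fun_prop)).continuousWithinAt
    · have h : HasDerivAt (fun y => f y * exp (-c * y))
          (c * f x * exp (-c * x) + f x * (exp (-c * x) * -c)) x := by
        rw [← hf' x hx.1]
        exact (hf x hx.1).hasDerivAt.mul (hasDerivAt_exp_mul (-c) x)
      rw [show c * f x * exp (-c * x) + f x * (exp (-c * x) * -c) = 0 by ring] at h
      exact h.hasDerivWithinAt
  have h := hconst s ⟨hs, le_rfl⟩
  rwa [mul_zero, exp_zero, mul_one, neg_mul, exp_neg, ← div_eq_mul_inv,
    div_eq_iff (exp_pos _).ne'] at h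

theorem le_rpow_of_deriv_le_neg_mul_rpow {Z : ℝ → ℝ} {a k p t : ℝ} (hk : 0 < k) (hp : 1 < p)
    (hZ : ∀ s, a ≤ s → 0 < Z s) (hZd : ∀ s, a ≤ s → DifferentiableAt ℝ Z s)
    (hZ' : ∀ s, a ≤ s → deriv Z s ≤ -k * Z s ^ p) (ht : a < t) :
    Z t ≤ ((p - 1) * k * (t - a)) ^ (-(p - 1)⁻¹) := by
  have hp₁ : 0 < p - 1 := sub_pos.2 hp
  have hta : 0 < t - a := sub_pos.2 ht
  have hW : ∀ s, a ≤ s → HasDerivAt (fun x => Z x ^ (1 - p))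
      ((1 - p) * Z s ^ (1 - p - 1) * deriv Z s) s := fun s hs =>
    (hasDerivAt_rpow_const (Or.inl (hZ s hs).ne')).comp s (hZd s hs).hasDerivAt
  have hW' : ∀ s, a ≤ s → (p - 1) * k ≤ (1 - p) * Z s ^ (1 - p - 1) * deriv Z s := by
    intro s hs
    have hcancel : Z s ^ (1 - p - 1) * Z s ^ p = 1 := by
      rw [← rpow_add (hZ s hs)]; norm_num
    have hneg : (1 - p) * Z s ^ (1 - p - 1) ≤ 0 :=
      mul_nonpos_of_nonpos_of_nonneg (by linarith) (rpow_pos_of_pos (hZ s hs) _).le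
    calc (p - 1) * k = (1 - p) * Z s ^ (1 - p - 1) * (-k * Z s ^ p) := by
          linear_combination (p - 1) * k * hcancel.symm
      _ ≤ (1 - p) * Z s ^ (1 - p - 1) * deriv Z s :=
          mul_le_mul_of_nonpos_left (hZ' s hs) hneg
  have hgrowth : (p - 1) * k * (t - a) ≤ Z t ^ (1 - p) - Z a ^ (1 - p) := by
    refine (convex_Ici a).mul_sub_le_image_sub_of_le_deriv
      (fun s hs => (hW s hs).continuousAt.continuousWithinAt)
      (fun s hs => (hW s (interior_subset hs)).differentiableAt.differentiableWithinAt)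
      (fun s hs => ?_) a self_mem_Ici t ht.le ht.le
    rw [(hW s (interior_subset hs)).deriv]
    exact hW' s (interior_subset hs)
  have hlin : (p - 1) * k * (t - a) ≤ Z t ^ (1 - p) := by
    linarith [rpow_pos_of_pos (hZ a le_rfl) (1 - p)]
  calc Z t = (Z t ^ (1 - p)) ^ (-(p - 1)⁻¹) := by
        rw [← rpow_mul (hZ t ht.le).le, show (1 - p) * -(p - 1)⁻¹ = 1 by
          field_simp [hp₁.ne']; ring, rpow_one]
    _ ≤ ((p - 1) * k * (t - a)) ^ (-(p - 1)⁻¹) :=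
        rpow_le_rpow_of_nonpos (by positivity) hlin (by rw [neg_nonpos]; positivity)

theorem deriv_exp_neg_mul_le {V : ℝ → ℝ} {μ₁ μ₂ C I₀ p q s : ℝ} (hC : 0 ≤ C) (hI₀ : 0 < I₀)
    (hs : 0 ≤ s) (hμ : q * μ₁ ≤ (p - 1) * μ₂) (hV : 0 < V s) (hVd : DifferentiableAt ℝ V s)
    (hV' : deriv V s ≤ μ₂ * V s - C * V s ^ p / (I₀ * exp (μ₁ * s)) ^ q) :
    deriv (fun x => exp (-μ₂ * x) * V x) s ≤ -(C * I₀ ^ (-q)) * (exp (-μ₂ * s) * V s) ^ p := by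
  have hexp : exp (-μ₂ * s) ^ p ≤ exp (-μ₂ * s) * (exp (q * μ₁ * s))⁻¹ := by
    rw [← exp_neg, ← exp_add, ← exp_mul]
    exact exp_le_exp.2 (by nlinarith)
  have hF : 0 ≤ C * V s ^ p * (I₀ ^ q)⁻¹ := by
    have := rpow_pos_of_pos hV p; have := rpow_pos_of_pos hI₀ q; positivity
  have hd : HasDerivAt (fun x => exp (-μ₂ * x) * V x)
      (exp (-μ₂ * s) * -μ₂ * V s + exp (-μ₂ * s) * deriv V s) s :=
    (hasDerivAt_exp_mul (-μ₂) s).mul hVd.hasDerivAt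
  rw [hd.deriv]
  calc exp (-μ₂ * s) * -μ₂ * V s + exp (-μ₂ * s) * deriv V s
      ≤ exp (-μ₂ * s) * -μ₂ * V s +
          exp (-μ₂ * s) * (μ₂ * V s - C * V s ^ p / (I₀ * exp (μ₁ * s)) ^ q) := by
        gcongr
    _ = -(C * V s ^ p * (I₀ ^ q)⁻¹) * (exp (-μ₂ * s) * (exp (q * μ₁ * s))⁻¹) := by
        rw [mul_rpow hI₀.le (exp_pos _).le, ← exp_mul]
        field_simp
        ring_nf
    _ ≤ -(C * V s ^ p * (I₀ ^ q)⁻¹) * exp (-μ₂ * s) ^ p :=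
        mul_le_mul_of_nonpos_left hexp (by linarith)
    _ = -(C * I₀ ^ (-q)) * (exp (-μ₂ * s) * V s) ^ p := by
        rw [rpow_neg hI₀.le, mul_rpow (exp_pos _).le hV.le]; ring

theorem exponential_moment_decay (C : ℝ) (hC : 0 < C) :
    ∃ C' : ℝ, 0 < C' ∧
      ∀ (μ₁ μ₂ : ℝ) (V I : ℝ → ℝ),
        (∀ t, 0 ≤ t → 0 < V t) → (∀ t, 0 ≤ t → 0 < I t) →
        (∀ t, 0 ≤ t → DifferentiableAt ℝ V t) → (∀ t, 0 ≤ t → DifferentiableAt ℝ I t) →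
        (∀ t, 0 ≤ t → deriv I t = μ₁ * I t) →
        (∀ t, 0 ≤ t →
          deriv V t ≤ μ₂ * V t - C * (V t) ^ ((5 : ℝ) / 3) / (I t) ^ ((4 : ℝ) / 3)) →
        0 < (2 / 3) * μ₂ - (4 / 3) * μ₁ →
        ∀ t, 1 < t →
          V t ≤ C' * Real.exp (μ₂ * t) * (I 0) ^ 2 * (t - 1) ^ (-(3 : ℝ) / 2) := by
  refine ⟨(2 * C / 3) ^ (-(3 : ℝ) / 2), by positivity, ?_⟩
  intro μ₁ μ₂ V I hV hI hVd hId hI' hV' hR t ht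
  have hI₀ := hI 0 le_rfl
  set Z := fun x => exp (-μ₂ * x) * V x with hZ
  have hZ' : ∀ s, 1 ≤ s → deriv Z s ≤ -(C * I 0 ^ (-(4 : ℝ) / 3)) * Z s ^ ((5 : ℝ) / 3) := by
    intro s hs
    have hs₀ : 0 ≤ s := zero_le_one.trans hs
    rw [neg_div]
    refine deriv_exp_neg_mul_le (μ₁ := μ₁) hC.le hI₀ hs₀ (by linarith) (hV s hs₀) (hVd s hs₀) ?_
    rw [← eq_mul_exp_of_deriv_eq_mul hId hI' hs₀]
    exact hV' s hs₀
  have hZt := le_rpow_of_deriv_le_neg_mul_rpow (a := 1) (p := 5 / 3) (by positivity) (by norm_num)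
    (fun s hs => mul_pos (exp_pos _) (hV s (zero_le_one.trans hs)))
    (fun s hs => ((hasDerivAt_exp_mul (-μ₂) s).differentiableAt.mul
      (hVd s (zero_le_one.trans hs)))) hZ' ht
  calc V t = exp (μ₂ * t) * Z t := by
        rw [hZ, ← mul_assoc, ← exp_add]; simp
    _ ≤ exp (μ₂ * t) *
          ((5 / 3 - 1) * (C * I 0 ^ (-(4 : ℝ) / 3)) * (t - 1)) ^ (-(5 / 3 - 1 : ℝ)⁻¹) := by
        gcongr
    _ = (2 * C / 3) ^ (-(3 : ℝ) / 2) * exp (μ₂ * t) * I 0 ^ 2 * (t - 1) ^ (-(3 : ℝ) / 2) := by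
        have ht₁ : 0 < t - 1 := sub_pos.2 ht
        rw [show (5 / 3 - 1 : ℝ) * (C * I 0 ^ (-(4 : ℝ) / 3)) * (t - 1) =
            2 * C / 3 * I 0 ^ (-(4 : ℝ) / 3) * (t - 1) by ring,
          show (-(5 / 3 - 1 : ℝ)⁻¹) = -3 / 2 by norm_num, mul_rpow (by positivity) ht₁.le,
          mul_rpow (by positivity) (by positivity), ← rpow_mul hI₀.le]
        norm_num
        ring
end

section
/- Let κ ≤ ρ be positive constants, λ*, c* > 0, and let u∞ : ℝ² → (0,1) satisfy κ(y-1)e^{-λ* y} ≤ u∞(t, c* t + y) ≤ ρ y e^{-λ*(y-1)} for all t ∈ ℝ and y ≥ 2. Suppose further that ξ* > 1/c* and u∞(t + p ξ*, x + p) / u∞(t, x) → 1 along sequences with x - c* t → +∞ for each fixed p ∈ ℕ (in the precise sense that for each p, u∞(tₙ + pξ*, xₙ + p)/u∞(tₙ, xₙ) → 1 whenever xₙ - c* tₙ → +∞ with xₙ integers). Then one reaches a contradiction: for each p, 1 ≥ (κ/ρ) e^{pλ*(c*ξ* - 1) - λ*}, which fails for large p since c*ξ* > 1. -/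
open Filter

theorem sliding_contradiction (κ ρ lam c ξ : ℝ) (hκ : 0 < κ) (hκρ : κ ≤ ρ)
    (hlam : 0 < lam) (hc : 0 < c) (u : ℝ → ℝ → ℝ)
    (hrange : ∀ t x, 0 < u t x ∧ u t x < 1)
    (hbounds : ∀ t y : ℝ, 2 ≤ y →
      κ * (y - 1) * Real.exp (-lam * y) ≤ u t (c * t + y) ∧
      u t (c * t + y) ≤ ρ * y * Real.exp (-lam * (y - 1)))
    (hξ : 1 / c < ξ)
    (hlim : ∀ p : ℕ, ∀ tn xn : ℕ → ℝ, (∀ n, ∃ m : ℤ, xn n = (m : ℝ)) →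
      Tendsto (fun n => xn n - c * tn n) atTop atTop →
      Tendsto (fun n => u (tn n + p * ξ) (xn n + p) / u (tn n) (xn n)) atTop (nhds 1)) :
    False := by
  have hρ : 0 < ρ := hκ.trans_le hκρ
  have hcξ : 1 < c * ξ := by
    have h := (div_lt_iff₀ hc).mp hξ
    nlinarith
  have hD : 0 < lam * (c * ξ - 1) := by nlinarith
  obtain ⟨p, hp⟩ := exists_nat_gt ((lam - Real.log (κ / ρ)) / (lam * (c * ξ - 1)))
  have hpD : lam - Real.log (κ / ρ) < (p : ℝ) * (lam * (c * ξ - 1)) := by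
    rw [div_lt_iff₀ hD] at hp; linarith
  set A := (κ / ρ) * Real.exp (lam * (c * ((p : ℝ) * ξ) - p - 1)) with hA
  have hA1 : 1 < A := by
    have hκρ' : κ / ρ = Real.exp (Real.log (κ / ρ)) := (Real.exp_log (by positivity)).symm
    rw [hA, hκρ', ← Real.exp_add]
    apply Real.one_lt_exp_iff.mpr
    have hring : lam * (c * ((p : ℝ) * ξ) - p - 1) = (p : ℝ) * (lam * (c * ξ - 1)) - lam := by
      ring
    linarith
  -- the sequences
  have htend : Tendsto (fun n : ℕ => (n : ℝ) - c * 0) atTop atTop := by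
    simpa using tendsto_natCast_atTop_atTop (R := ℝ)
  have hT := hlim p (fun _ => 0) (fun n => (n : ℝ)) (fun n => ⟨n, by simp⟩) htend
  -- the comparison sequence
  set C : ℝ := (p : ℝ) - c * ((p : ℝ) * ξ) - 1 with hC
  have hg : Tendsto (fun n : ℕ => A * (((n : ℝ) + C) / n)) atTop (nhds A) := by
    have h1 : Tendsto (fun n : ℕ => A * (1 + C / n)) atTop (nhds (A * (1 + 0))) := by
      exact (tendsto_const_nhds.add (tendsto_const_div_atTop_nhds_zero_nat C)).const_mul A
    rw [add_zero, mul_one] at h1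
    apply h1.congr'
    filter_upwards [eventually_ge_atTop 1] with n hn
    have hn0 : (n : ℝ) ≠ 0 := by positivity
    field_simp
  have key : ∀ᶠ n : ℕ in atTop,
      A * (((n : ℝ) + C) / n) ≤ u (0 + (p : ℝ) * ξ) ((n : ℝ) + p) / u 0 (n : ℝ) := by
    obtain ⟨N, hN⟩ := exists_nat_ge (max 2 (2 + c * ((p : ℝ) * ξ) - p))
    filter_upwards [eventually_ge_atTop N] with n hn
    have hnN : (N : ℝ) ≤ (n : ℝ) := by exact_mod_cast hn
    have hn2 : (2 : ℝ) ≤ (n : ℝ) := le_trans (le_trans (le_max_left _ _) hN) hnN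
    set y1 : ℝ := (n : ℝ) + p - c * ((p : ℝ) * ξ) with hy1def
    have hy1 : (2 : ℝ) ≤ y1 := by
      have := le_trans (le_trans (le_max_right _ _) hN) hnN
      rw [hy1def]; linarith
    obtain ⟨hl, -⟩ := hbounds ((p : ℝ) * ξ) y1 hy1
    have hxe : c * ((p : ℝ) * ξ) + y1 = (n : ℝ) + p := by rw [hy1def]; ring
    rw [hxe] at hl
    obtain ⟨-, hu2⟩ := hbounds 0 (n : ℝ) hn2
    rw [mul_zero, zero_add] at hu2
    have hupos : 0 < u 0 (n : ℝ) := (hrange 0 (n : ℝ)).1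
    have hnum : 0 ≤ u ((p : ℝ) * ξ) ((n : ℝ) + p) := le_of_lt (hrange _ _).1
    have hdiv : κ * (y1 - 1) * Real.exp (-lam * y1) / (ρ * (n : ℝ) * Real.exp (-lam * ((n : ℝ) - 1)))
        ≤ u ((p : ℝ) * ξ) ((n : ℝ) + p) / u 0 (n : ℝ) :=
      div_le_div₀ hnum hl hupos hu2
    have hEq : A * (((n : ℝ) + C) / n)
        = κ * (y1 - 1) * Real.exp (-lam * y1) / (ρ * (n : ℝ) * Real.exp (-lam * ((n : ℝ) - 1))) := by
      have hE : Real.exp (-lam * y1)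
          = Real.exp (lam * (c * ((p : ℝ) * ξ) - p - 1)) * Real.exp (-lam * ((n : ℝ) - 1)) := by
        rw [← Real.exp_add]
        congr 1
        rw [hy1def]; ring
      rw [hA, hC, hE, hy1def]
      have hn0 : (n : ℝ) ≠ 0 := by positivity
      have he1 : Real.exp (-lam * ((n : ℝ) - 1)) ≠ 0 := Real.exp_ne_zero _
      field_simp
      ring
    rw [hEq, zero_add]
    exact hdiv
  have hA_le : A ≤ 1 := le_of_tendsto_of_tendsto hg hT key
  linarith
end
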